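/- arXiv:1211.5796 — 3 statements merged into one kernel-verified Lean document; each statement's English description precedes it below -/
import Mathlib

section
/- Let Φ ∈ C_c^∞([0,1)) with ∫_{ℝ^n} Φ(|x|) dx = 1 and Φ_t(x) = t^{-n} Φ(|x|/t). Then for every F ∈ L¹_loc(Ω) on an open set Ω ⊂ ℝ^n, every x ∈ Ω and 0 < t < dist(x, ∂Ω), one has |(F ∗ Φ_t)(x)| ≤ (C_Φ / t^{n+1}) ∫_0^t |∫_{B(x,r)} F(y) dy| dr, where C_Φ = ‖Φ'‖_{L^∞[0,1)}. -/
open MeasureTheory Metric ENNReal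
noncomputable section

/-- Let `Φ ∈ C_c^∞([0,1))` with `∫_{ℝ^n} Φ(|x|) dx = 1` and `Φ_t(x) = t^{-n} Φ(|x|/t)`.
For every `F ∈ L¹_loc(Ω)`, `x ∈ Ω` and `0 < t < dist(x, ∂Ω)`:
`|(F ∗ Φ_t)(x)| ≤ (C_Φ / t^{n+1}) ∫_0^t |∫_{B(x,r)} F| dr`, where `C_Φ` bounds `|Φ'|` on `[0,1)`. -/
theorem mollification_bound_by_ball_integrals
    {n : ℕ} (Φ : ℝ → ℝ) (hΦsmooth : ContDiff ℝ (⊤ : ℕ∞) Φ)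
    (hΦsupp : ∀ r : ℝ, 1 ≤ r → Φ r = 0)
    (hΦnorm : ∫ x : EuclideanSpace ℝ (Fin n), Φ ‖x‖ = 1)
    (C : ℝ) (hC : ∀ r ∈ Set.Ico (0 : ℝ) 1, |deriv Φ r| ≤ C)
    (Ω : Set (EuclideanSpace ℝ (Fin n))) (hΩ : IsOpen Ω)
    (F : EuclideanSpace ℝ (Fin n) → ℝ) (hF : LocallyIntegrableOn F Ω volume)
    (x : EuclideanSpace ℝ (Fin n)) (hx : x ∈ Ω)
    (t : ℝ) (ht : 0 < t) (ht' : t < Metric.infDist x Ωᶜ) :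
    |∫ y in Ω, t ^ (-(n : ℝ)) * Φ (‖x - y‖ / t) * F y| ≤
      (C / t ^ (n + 1)) *
        ∫ r in Set.Ioc (0 : ℝ) t, |∫ y in Metric.ball x r, F y| := by
  have hC0 : 0 ≤ C := (abs_nonneg _).trans (hC 0 ⟨le_refl _, one_pos⟩)
  have htn : (0:ℝ) < t ^ (n+1) := pow_pos ht _
  have hΦdcont : Continuous (deriv Φ) := hΦsmooth.continuous_deriv (by simp)
  -- deriv Φ vanishes at 1
  have hderiv1 : deriv Φ 1 = 0 := by
    have hz : ∀ s ∈ Set.Ioi (1:ℝ), deriv Φ s = 0 := by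
      intro s hs
      have hev : Φ =ᶠ[nhds s] (fun _ => (0:ℝ)) :=
        Filter.eventuallyEq_of_mem (isOpen_Ioi.mem_nhds hs) fun u hu => hΦsupp u (le_of_lt hu)
      rw [hev.deriv_eq, deriv_const]
    have h1 : Filter.Tendsto (deriv Φ) (nhdsWithin 1 (Set.Ioi 1)) (nhds (deriv Φ 1)) :=
      hΦdcont.continuousAt.tendsto.mono_left nhdsWithin_le_nhds
    have h2 : Filter.Tendsto (deriv Φ) (nhdsWithin 1 (Set.Ioi 1)) (nhds 0) := by
      refine Filter.Tendsto.congr' ?_ tendsto_const_nhds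
      filter_upwards [self_mem_nhdsWithin] with s hs using (hz s hs).symm
    exact tendsto_nhds_unique h1 h2
  have hC' : ∀ s ∈ Set.Ioc (0:ℝ) 1, |deriv Φ s| ≤ C := by
    intro s hs
    rcases lt_or_eq_of_le hs.2 with h | h
    · exact hC s ⟨hs.1.le, h⟩
    · rw [h, hderiv1]; simpa using hC0
  -- the closed ball is inside Ω
  have hball : closedBall x t ⊆ Ω := by
    intro y hy
    by_contra hyΩ
    have h1 : infDist x Ωᶜ ≤ dist x y := infDist_le_dist_of_mem hyΩ
    rw [mem_closedBall, dist_comm] at hy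
    linarith
  have hFt : IntegrableOn F (closedBall x t) volume :=
    hF.integrableOn_compact_subset hball (isCompact_closedBall x t)
  have hFb : IntegrableOn F (ball x t) volume := hFt.mono_set ball_subset_closedBall
  -- FTC : Φ (u / t) = -∫_{Ioc u t} deriv Φ (r/t) * t⁻¹
  have hFTC : ∀ u : ℝ, 0 ≤ u → u ≤ t →
      Φ (u / t) = -∫ r in Set.Ioc u t, deriv Φ (r / t) * t⁻¹ := by
    intro u hu hut
    have hderivAt : ∀ r ∈ Set.uIcc u t,
        HasDerivAt (fun r => Φ (r / t)) (deriv Φ (r / t) * t⁻¹) r := by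
      intro r _
      have h1 : HasDerivAt Φ (deriv Φ (r / t)) (r / t) :=
        ((hΦsmooth.differentiable (by simp)) (r / t)).hasDerivAt
      have h2 : HasDerivAt (fun r : ℝ => r / t) t⁻¹ r := by
        simpa using (hasDerivAt_id r).div_const t
      exact h1.comp r h2
    have hint : IntervalIntegrable (fun r => deriv Φ (r / t) * t⁻¹) volume u t :=
      ((hΦdcont.comp (continuous_id.div_const t)).mul continuous_const).intervalIntegrable u t
    have h := intervalIntegral.integral_eq_sub_of_hasDerivAt hderivAt hint
    rw [div_self ht.ne', hΦsupp 1 le_rfl, intervalIntegral.integral_of_le hut] at h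
    linarith
  -- reduce the domain of integration from Ω to ball x t
  have hsub : ball x t ⊆ Ω := fun y hy => hball (ball_subset_closedBall hy)
  have hred : ∫ y in Ω, t ^ (-(n : ℝ)) * Φ (‖x - y‖ / t) * F y
      = ∫ y in ball x t, t ^ (-(n : ℝ)) * Φ (‖x - y‖ / t) * F y := by
    refine setIntegral_eq_of_subset_of_forall_diff_eq_zero hΩ.measurableSet hsub ?_
    intro y hy
    have h1 : t ≤ ‖x - y‖ := by
      have h2 := hy.2
      rw [mem_ball, dist_eq_norm, ← norm_sub_rev] at h2
      linarith [not_lt.mp h2]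
    rw [hΦsupp _ ((one_le_div ht).2 h1), mul_zero, zero_mul]
  -- set up the double integral
  set μ := volume.restrict (ball x t) with hμ
  set ν := volume.restrict (Set.Ioc (0:ℝ) t) with hν
  haveI : IsFiniteMeasure ν := by
    constructor
    rw [hν, Measure.restrict_apply_univ]
    exact measure_Ioc_lt_top
  set S : Set ((EuclideanSpace ℝ (Fin n)) × ℝ) := {p | ‖x - p.1‖ < p.2} with hS
  have hSopen : IsOpen S := by
    apply isOpen_lt _ continuous_snd
    exact (continuous_const.sub continuous_fst).norm
  set f : EuclideanSpace ℝ (Fin n) → ℝ → ℝ :=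
    fun y r => S.indicator (fun p => deriv Φ (p.2 / t)) (y, r) * F y with hf'
  set f₂ : EuclideanSpace ℝ (Fin n) → ℝ → ℝ :=
    fun y r => S.indicator (fun _ => (1:ℝ)) (y, r) * F y with hf₂'
  set g : ℝ → ℝ := fun r => ∫ y in ball x r, F y with hgdef
  -- a.e. on the product, the second coordinate lies in Ioc 0 t
  have hae2 : ∀ᵐ p ∂(μ.prod ν), p.2 ∈ Set.Ioc (0:ℝ) t :=
    Measure.quasiMeasurePreserving_snd.ae (ae_restrict_mem measurableSet_Ioc)
  -- integrability of the two double integrands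
  have hbound : Integrable (fun z : (EuclideanSpace ℝ (Fin n)) × ℝ =>
      (C * |F z.1|) * (1:ℝ)) (μ.prod ν) := by
    refine Integrable.mul_prod (f := fun a => C * |F a|) (g := fun _ => (1:ℝ)) ?_ (integrable_const (1:ℝ))
    simpa [Real.norm_eq_abs] using hFb.norm.const_mul C
  have hmeasF : AEStronglyMeasurable (fun p : (EuclideanSpace ℝ (Fin n)) × ℝ => F p.1)
      (μ.prod ν) := hFb.aestronglyMeasurable.comp_fst
  have hintf : Integrable (Function.uncurry f) (μ.prod ν) := by
    refine Integrable.mono' hbound ?_ ?_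
    · exact (((hΦdcont.comp (continuous_snd.div_const t)).aestronglyMeasurable).indicator
        hSopen.measurableSet).mul hmeasF
    · filter_upwards [hae2] with p hp
      simp only [Function.uncurry]
      rw [norm_mul, mul_one]
      refine mul_le_mul_of_nonneg_right ?_ (by simp [Real.norm_eq_abs])
      by_cases hmem : (p.1, p.2) ∈ S
      · rw [Set.indicator_of_mem hmem]
        have hp2 : (0:ℝ) < p.2 := hp.1
        exact le_trans (le_of_eq (Real.norm_eq_abs _))
          (hC' (p.2 / t) ⟨div_pos hp2 ht, (div_le_one ht).2 hp.2⟩)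
      · rw [Set.indicator_of_notMem hmem]; simpa using hC0
  have hbound₂ : Integrable (fun z : (EuclideanSpace ℝ (Fin n)) × ℝ =>
      |F z.1| * (1:ℝ)) (μ.prod ν) :=
    Integrable.mul_prod (f := fun a => |F a|) (g := fun _ => (1:ℝ)) (by simpa [Real.norm_eq_abs] using hFb.norm) (integrable_const (1:ℝ))
  have hintf₂ : Integrable (Function.uncurry f₂) (μ.prod ν) := by
    refine Integrable.mono' hbound₂
      ((aestronglyMeasurable_const.indicator hSopen.measurableSet).mul hmeasF) ?_
    refine Filter.Eventually.of_forall fun p => ?_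
    simp only [Function.uncurry]
    rw [norm_mul, mul_one, ← Real.norm_eq_abs (F p.1)]
    refine mul_le_of_le_one_left (norm_nonneg _) ?_
    by_cases hmem : (p.1, p.2) ∈ S
    · rw [Set.indicator_of_mem hmem]; simp
    · rw [Set.indicator_of_notMem hmem]; simp
  -- inner integral in r
  have hinner : ∀ y ∈ ball x t, (∫ r in Set.Ioc (0:ℝ) t, f y r)
      = (∫ r in Set.Ioc ‖x - y‖ t, deriv Φ (r / t)) * F y := by
    intro y _
    rw [hf']
    simp only
    rw [integral_mul_const]
    congr 1
    have heq : ∀ r : ℝ, S.indicator (fun p => deriv Φ (p.2 / t)) (y, r)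
        = (Set.Ioi ‖x - y‖).indicator (fun r => deriv Φ (r / t)) r := by
      intro r
      by_cases hmem : ‖x - y‖ < r <;>
        simp [Set.indicator_apply, hS, Set.mem_Ioi, Set.mem_setOf_eq, hmem]
    rw [show (fun r => S.indicator (fun p => deriv Φ (p.2 / t)) (y, r))
        = (Set.Ioi ‖x - y‖).indicator (fun r => deriv Φ (r / t)) from funext heq]
    rw [setIntegral_indicator measurableSet_Ioi, Set.Ioc_inter_Ioi,
      max_eq_right (norm_nonneg _)]
  -- inner integral in y
  have hinner2 : ∀ r ∈ Set.Ioc (0:ℝ) t, (∫ y in ball x t, f y r)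
      = deriv Φ (r / t) * g r := by
    intro r hr
    have heq : ∀ y, f y r = (ball x r).indicator (fun y => deriv Φ (r / t) * F y) y := by
      intro y
      rw [hf']
      simp only
      have hiff : y ∈ ball x r ↔ ‖x - y‖ < r := by
        rw [mem_ball, dist_eq_norm, norm_sub_rev]
      by_cases hmem : ‖x - y‖ < r <;>
        simp [Set.indicator_apply, hS, Set.mem_setOf_eq, hmem, hiff]
    rw [funext heq, setIntegral_indicator measurableSet_ball,
      Set.inter_eq_self_of_subset_right (ball_subset_ball hr.2),
      integral_const_mul]
  have hinner2' : ∀ r ∈ Set.Ioc (0:ℝ) t, (∫ y in ball x t, f₂ y r) = g r := by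
    intro r hr
    have heq : ∀ y, f₂ y r = (ball x r).indicator F y := by
      intro y
      rw [hf₂']
      simp only
      have hiff : y ∈ ball x r ↔ ‖x - y‖ < r := by
        rw [mem_ball, dist_eq_norm, norm_sub_rev]
      by_cases hmem : ‖x - y‖ < r <;>
        simp [Set.indicator_apply, hS, Set.mem_setOf_eq, hmem, hiff]
    rw [funext heq, setIntegral_indicator measurableSet_ball,
      Set.inter_eq_self_of_subset_right (ball_subset_ball hr.2)]
  -- integrability of g on Ioc 0 t
  have hgint : Integrable g ν := by
    have h1 : Integrable (fun r => ∫ y, f₂ y r ∂μ) ν :=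
      hintf₂.integral_prod_right
    refine h1.congr ?_
    filter_upwards [ae_restrict_mem measurableSet_Ioc] with r hr
    exact hinner2' r hr
  -- main rewriting of the left-hand side
  have hmain : ∫ y in ball x t, t ^ (-(n : ℝ)) * Φ (‖x - y‖ / t) * F y
      = (-(t ^ (-(n : ℝ)) * t⁻¹)) * ∫ y in ball x t, ∫ r in Set.Ioc (0:ℝ) t, f y r := by
    rw [← integral_const_mul]
    refine setIntegral_congr_fun measurableSet_ball fun y hy => ?_
    have hyt : ‖x - y‖ < t := by
      rw [mem_ball, dist_eq_norm, ← norm_sub_rev] at hy; exact hy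
    rw [hFTC ‖x - y‖ (norm_nonneg _) hyt.le, hinner y (by
      rw [mem_ball, dist_eq_norm, ← norm_sub_rev]; exact hyt),
      integral_mul_const]
    ring
  -- Fubini
  have hswap : (∫ y in ball x t, ∫ r in Set.Ioc (0:ℝ) t, f y r)
      = ∫ r in Set.Ioc (0:ℝ) t, ∫ y in ball x t, f y r := by
    exact integral_integral_swap hintf
  have hrw2 : (∫ r in Set.Ioc (0:ℝ) t, ∫ y in ball x t, f y r)
      = ∫ r in Set.Ioc (0:ℝ) t, deriv Φ (r / t) * g r :=
    setIntegral_congr_fun measurableSet_Ioc fun r hr => hinner2 r hr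
  -- final estimate
  have hest : |∫ r in Set.Ioc (0:ℝ) t, deriv Φ (r / t) * g r|
      ≤ C * ∫ r in Set.Ioc (0:ℝ) t, |g r| := by
    rw [← Real.norm_eq_abs, ← integral_const_mul]
    refine norm_integral_le_of_norm_le (hgint.abs.const_mul C) ?_
    filter_upwards [ae_restrict_mem measurableSet_Ioc] with r hr
    rw [norm_mul, Real.norm_eq_abs, Real.norm_eq_abs]
    exact mul_le_mul_of_nonneg_right
      (hC' (r / t) ⟨div_pos hr.1 ht, (div_le_one ht).2 hr.2⟩) (abs_nonneg _)
  -- put everything together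
  rw [hred, hmain, hswap, hrw2, abs_mul]
  have hcoef : |(-(t ^ (-(n : ℝ)) * t⁻¹))| = (t ^ (n + 1))⁻¹ := by
    rw [abs_neg, abs_mul]
    rw [abs_of_pos (Real.rpow_pos_of_pos ht _), abs_of_pos (inv_pos.2 ht)]
    rw [Real.rpow_neg ht.le, Real.rpow_natCast, pow_succ, mul_inv]
  rw [hcoef]
  calc (t ^ (n + 1))⁻¹ * |∫ r in Set.Ioc (0:ℝ) t, deriv Φ (r / t) * g r|
      ≤ (t ^ (n + 1))⁻¹ * (C * ∫ r in Set.Ioc (0:ℝ) t, |g r|) := by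
        exact mul_le_mul_of_nonneg_left hest (inv_pos.2 htn).le
    _ = (C / t ^ (n + 1)) * ∫ r in Set.Ioc (0:ℝ) t, |g r| := by ring
end
end

section
/- The functional F ↦ ∫_B |F| · log( e + |F|/|F|_B ) dx on measurable functions on a ball B (where |F|_B is the average of |F| over B) satisfies the triangle inequality ‖F+G‖ ≤ ‖F‖ + ‖G‖, and hence defines a norm on the Zygmund space L log L(B). -/
open MeasureTheory Metric ENNReal
noncomputable section

/-- The Zygmund functional `F ↦ ∫_B |F| log(e + |F|/|F|_B)` on a ball `B`,
where `|F|_B` is the average of `|F|` over `B`. -/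
def zygmundNorm {n : ℕ} (B : Set (EuclideanSpace ℝ (Fin n)))
    (F : EuclideanSpace ℝ (Fin n) → ℝ) : ℝ≥0∞ :=
  ∫⁻ y in B, ‖F y‖₊ *
    ENNReal.ofReal (Real.log (Real.exp 1 + |F y| / ⨍ z in B, |F z|))

/-! `Φ(u, v) = u log (e + u / v)` is the perspective of the convex function
`ψ x = x log (e + x)`, hence convex and 1-homogeneous for `u ≥ 0, v > 0`: it lies above each
of its tangent planes, which pass through the origin. Let `h = |F + G|`, `c = ⨍ h`, and let
`α y * u - γ y * v` be the tangent plane of `Φ` at `(h y, c)`. Because `(⨍ γ) ∫ f = (⨍ f) ∫ γ`,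
integrating against the weight `w = α - ⨍ γ` gives `∫ w h = ∫ Φ(h, ⨍ h)` (tangency) and
`∫ w f ≤ ∫ Φ(f, ⨍ f)` for every `f ≥ 0`. Since `α ≥ 1 ≥ ⨍ γ`, the weight is nonnegative, and
`h ≤ |F| + |G|` concludes. -/

open Real

lemma one_le_log_exp_add {x : ℝ} (hx : 0 ≤ x) : 1 ≤ log (exp 1 + x) :=
  (le_log_iff_exp_le (by positivity)).2 (by linarith)

/-- The tangent line of the convex function `ψ x = x log (e + x)` at `p` is
`q ↦ zygmundSlope p * q - zygmundOffset p`. -/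
def zygmundSlope (p : ℝ) : ℝ := log (exp 1 + p) + p / (exp 1 + p)

def zygmundOffset (p : ℝ) : ℝ := p ^ 2 / (exp 1 + p)

lemma one_le_zygmundSlope {p : ℝ} (hp : 0 ≤ p) : 1 ≤ zygmundSlope p := by
  have hfrac : 0 ≤ p / (exp 1 + p) := by positivity
  rw [zygmundSlope]
  linarith [one_le_log_exp_add hp]

lemma zygmundOffset_nonneg {p : ℝ} (hp : 0 ≤ p) : 0 ≤ zygmundOffset p := by
  unfold zygmundOffset; positivity

lemma zygmundOffset_le_self {p : ℝ} (hp : 0 ≤ p) : zygmundOffset p ≤ p := by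
  have he : 0 < exp 1 := exp_pos 1
  rw [zygmundOffset, div_le_iff₀ (by positivity)]
  nlinarith

lemma zygmundSlope_mul_le {p q : ℝ} (hp : 0 ≤ p) (hq : 0 ≤ q) :
    zygmundSlope p * q ≤ q * log (exp 1 + q) + zygmundOffset p := by
  have he : 0 < exp 1 := exp_pos 1
  have hlog : (q - p) / (exp 1 + q) ≤ log (exp 1 + q) - log (exp 1 + p) := by
    have h := one_sub_inv_le_log_of_pos (x := (exp 1 + q) / (exp 1 + p)) (by positivity)
    rw [log_div (by positivity) (by positivity), inv_div] at h
    calc (q - p) / (exp 1 + q) = 1 - (exp 1 + p) / (exp 1 + q) := by field_simp; ring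
      _ ≤ _ := h
  have hconv : 0 ≤ q * ((q - p) / (exp 1 + q)) - p * (q - p) / (exp 1 + p) := by
    have : q * ((q - p) / (exp 1 + q)) - p * (q - p) / (exp 1 + p)
        = exp 1 * (q - p) ^ 2 / ((exp 1 + q) * (exp 1 + p)) := by field_simp; ring
    rw [this]; positivity
  have key : zygmundSlope p * q = q * log (exp 1 + p) + p * (q - p) / (exp 1 + p)
      + zygmundOffset p := by
    unfold zygmundSlope zygmundOffset; field_simp; ring
  nlinarith [mul_le_mul_of_nonneg_left hlog hq]

lemma zygmundSlope_mul_le_of_pos {p u v : ℝ} (hp : 0 ≤ p) (hu : 0 ≤ u) (hv : 0 < v) :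
    zygmundSlope p * u ≤ u * log (exp 1 + u / v) + zygmundOffset p * v := by
  have h := mul_le_mul_of_nonneg_left (zygmundSlope_mul_le hp (div_nonneg hu hv.le)) hv.le
  have e1 : v * (zygmundSlope p * (u / v)) = zygmundSlope p * u := by field_simp
  have e2 : v * (u / v * log (exp 1 + u / v) + zygmundOffset p)
      = u * log (exp 1 + u / v) + zygmundOffset p * v := by field_simp
  rwa [e1, e2] at h

lemma zygmundSlope_div_mul_self (t c : ℝ) :
    zygmundSlope (t / c) * t = t * log (exp 1 + t / c) + zygmundOffset (t / c) * c := by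
  rcases eq_or_ne c 0 with rfl | hc
  · simp [zygmundSlope, zygmundOffset]
  have : t / c * t = (t / c) ^ 2 * c := by field_simp
  rw [zygmundSlope, zygmundOffset, add_mul, mul_comm (Real.log _) t,
    div_mul_eq_mul_div (t / c), div_mul_eq_mul_div ((t / c) ^ 2), this]

section
variable {X : Type*} [MeasurableSpace X] {μ : Measure X}

def zygmundFunctional (μ : Measure X) (f : X → ℝ) : ℝ≥0∞ :=
  ∫⁻ y, ENNReal.ofReal (f y * log (exp 1 + f y / ⨍ z, f z ∂μ)) ∂μ

/-- With `c = ⨍ h`, the tangent plane of `Φ` at `(h y, c)` is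
`(u, v) ↦ zygmundSlope (h y / c) * u - zygmundOffset (h y / c) * v`. -/
def zygmundWeight (μ : Measure X) (h : X → ℝ) (y : X) : ℝ :=
  zygmundSlope (h y / ⨍ z, h z ∂μ) - ⨍ z, zygmundOffset (h z / ⨍ z', h z' ∂μ) ∂μ

lemma average_nonneg_of_nonneg {f : X → ℝ} (hf : 0 ≤ f) : 0 ≤ ⨍ z, f z ∂μ := by
  rw [average_eq]
  exact smul_nonneg (by positivity) (integral_nonneg hf)

lemma average_mul_integral_comm (f g : X → ℝ) :
    (⨍ z, f z ∂μ) * ∫ z, g z ∂μ = (∫ z, f z ∂μ) * ⨍ z, g z ∂μ := by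
  simp only [average_eq, smul_eq_mul]
  ring

lemma ae_eq_zero_of_average_eq_zero [IsFiniteMeasure μ] {f : X → ℝ} (hf : Integrable f μ)
    (hf0 : 0 ≤ f) (h : ⨍ z, f z ∂μ = 0) : f =ᵐ[μ] 0 := by
  rw [← integral_eq_zero_iff_of_nonneg hf0 hf, ← measure_smul_average, h, smul_zero]

lemma lintegral_ofReal_add {φ ψ : X → ℝ} (hφ : AEMeasurable φ μ) (hφ0 : 0 ≤ φ) (hψ0 : 0 ≤ ψ) :
    ∫⁻ y, ENNReal.ofReal (φ y + ψ y) ∂μ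
      = ∫⁻ y, ENNReal.ofReal (φ y) ∂μ + ∫⁻ y, ENNReal.ofReal (ψ y) ∂μ := by
  rw [← lintegral_add_left' hφ.ennreal_ofReal]
  exact lintegral_congr fun y => ENNReal.ofReal_add (hφ0 y) (hψ0 y)

lemma lintegral_ofReal_add_mul_const {φ γ : X → ℝ} {a : ℝ} (hφ : AEMeasurable φ μ)
    (hφ0 : 0 ≤ φ) (hγ : Integrable γ μ) (hγ0 : 0 ≤ γ) (ha : 0 ≤ a) :
    ∫⁻ y, ENNReal.ofReal (φ y + γ y * a) ∂μ
      = ∫⁻ y, ENNReal.ofReal (φ y) ∂μ + ENNReal.ofReal ((∫ y, γ y ∂μ) * a) := by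
  rw [lintegral_ofReal_add hφ hφ0 fun y => mul_nonneg (hγ0 y) ha, ← integral_mul_const,
    ofReal_integral_eq_lintegral_ofReal (hγ.mul_const a)
      (ae_of_all _ fun y => mul_nonneg (hγ0 y) ha)]

lemma lintegral_ofReal_sub_const_mul_add {α f : X → ℝ} {b : ℝ} (hα : AEMeasurable α μ)
    (hf : Integrable f μ) (hf0 : 0 ≤ f) (hb : 0 ≤ b) (hbα : ∀ y, b ≤ α y) :
    ∫⁻ y, ENNReal.ofReal ((α y - b) * f y) ∂μ + ENNReal.ofReal (b * ∫ y, f y ∂μ)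
      = ∫⁻ y, ENNReal.ofReal (α y * f y) ∂μ := by
  rw [← integral_const_mul, ofReal_integral_eq_lintegral_ofReal (hf.const_mul b)
    (ae_of_all _ fun y => mul_nonneg hb (hf0 y)),
    ← lintegral_ofReal_add ((hα.sub_const b).fun_mul hf.aemeasurable)
      (fun y => mul_nonneg (sub_nonneg.2 (hbα y)) (hf0 y)) fun y => mul_nonneg hb (hf0 y)]
  simp only [← add_mul, sub_add_cancel]

lemma measurable_zygmundSlope : Measurable zygmundSlope := by
  unfold zygmundSlope; fun_prop

lemma measurable_zygmundOffset : Measurable zygmundOffset := by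
  unfold zygmundOffset; fun_prop

variable {h : X → ℝ}

lemma integrable_zygmundOffset (hh : Integrable h μ) (hh0 : 0 ≤ h) {c : ℝ} (hc : 0 ≤ c) :
    Integrable (fun y => zygmundOffset (h y / c)) μ := by
  have hmeas := measurable_zygmundOffset.comp_aemeasurable (hh.aemeasurable.div_const c)
  refine (hh.div_const c).mono' hmeas.aestronglyMeasurable (ae_of_all _ fun y => ?_)
  have hp : 0 ≤ h y / c := div_nonneg (hh0 y) hc
  rw [Real.norm_eq_abs, abs_of_nonneg (zygmundOffset_nonneg hp)]
  exact zygmundOffset_le_self hp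

lemma average_zygmundOffset_le_one (hh : Integrable h μ) (hh0 : 0 ≤ h) :
    ⨍ y, zygmundOffset (h y / ⨍ z, h z ∂μ) ∂μ ≤ 1 := by
  set c := ⨍ z, h z ∂μ with hc_def
  have hc : 0 ≤ c := average_nonneg_of_nonneg hh0
  calc ⨍ y, zygmundOffset (h y / c) ∂μ ≤ ⨍ y, h y / c ∂μ := by
        simp only [average_eq, smul_eq_mul]
        exact mul_le_mul_of_nonneg_left (integral_mono (integrable_zygmundOffset hh hh0 hc)
          (hh.div_const c) fun y => zygmundOffset_le_self (div_nonneg (hh0 y) hc))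
          (by positivity)
    _ = c / c := by simp only [hc_def, average_eq, smul_eq_mul, integral_div, mul_div_assoc]
    _ ≤ 1 := div_self_le_one c

lemma zygmundWeight_nonneg (hh : Integrable h μ) (hh0 : 0 ≤ h) (y : X) :
    0 ≤ zygmundWeight μ h y :=
  sub_nonneg.2 <| (average_zygmundOffset_le_one hh hh0).trans <|
    one_le_zygmundSlope (div_nonneg (hh0 y) (average_nonneg_of_nonneg hh0))

lemma aemeasurable_zygmundWeight (hh : AEMeasurable h μ) :
    AEMeasurable (zygmundWeight μ h) μ :=
  (measurable_zygmundSlope.comp_aemeasurable (hh.div_const _)).sub_const _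

lemma lintegral_zygmundWeight_mul_add_eq {f : X → ℝ} (hh : Integrable h μ) (hh0 : 0 ≤ h)
    (hf : Integrable f μ) (hf0 : 0 ≤ f) :
    ∫⁻ y, ENNReal.ofReal (zygmundWeight μ h y * f y) ∂μ
        + ENNReal.ofReal ((∫ y, zygmundOffset (h y / ⨍ z, h z ∂μ) ∂μ) * ⨍ z, f z ∂μ)
      = ∫⁻ y, ENNReal.ofReal (zygmundSlope (h y / ⨍ z, h z ∂μ) * f y) ∂μ := by
  have hc : 0 ≤ ⨍ z, h z ∂μ := average_nonneg_of_nonneg hh0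
  rw [← average_mul_integral_comm]
  exact lintegral_ofReal_sub_const_mul_add
    (measurable_zygmundSlope.comp_aemeasurable (hh.aemeasurable.div_const _)) hf hf0
    (average_nonneg_of_nonneg fun y => zygmundOffset_nonneg (div_nonneg (hh0 y) hc))
    fun y => (average_zygmundOffset_le_one hh hh0).trans
      (one_le_zygmundSlope (div_nonneg (hh0 y) hc))

lemma zygmundFunctional_add_eq_lintegral {f : X → ℝ} (hh : Integrable h μ) (hh0 : 0 ≤ h)
    (hf : Integrable f μ) (hf0 : 0 ≤ f) :
    zygmundFunctional μ f
        + ENNReal.ofReal ((∫ y, zygmundOffset (h y / ⨍ z, h z ∂μ) ∂μ) * ⨍ z, f z ∂μ)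
      = ∫⁻ y, ENNReal.ofReal (f y * log (exp 1 + f y / ⨍ z, f z ∂μ)
          + zygmundOffset (h y / ⨍ z, h z ∂μ) * ⨍ z, f z ∂μ) ∂μ := by
  have hc : 0 ≤ ⨍ z, h z ∂μ := average_nonneg_of_nonneg hh0
  have ha : 0 ≤ ⨍ z, f z ∂μ := average_nonneg_of_nonneg hf0
  have hf_log : AEMeasurable (fun y => f y * log (exp 1 + f y / ⨍ z, f z ∂μ)) μ := by
    have := hf.aemeasurable
    fun_prop
  exact (lintegral_ofReal_add_mul_const hf_log
    (fun y => mul_nonneg (hf0 y) (zero_le_one.trans (one_le_log_exp_add (div_nonneg (hf0 y) ha))))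
    (integrable_zygmundOffset hh hh0 hc) (fun y => zygmundOffset_nonneg (div_nonneg (hh0 y) hc))
    ha).symm

lemma lintegral_zygmundWeight_mul_self (hh : Integrable h μ) (hh0 : 0 ≤ h) :
    ∫⁻ y, ENNReal.ofReal (zygmundWeight μ h y * h y) ∂μ = zygmundFunctional μ h := by
  have key := lintegral_zygmundWeight_mul_add_eq hh hh0 hh hh0
  simp_rw [zygmundSlope_div_mul_self, ← zygmundFunctional_add_eq_lintegral hh hh0 hh hh0] at key
  exact (ENNReal.add_left_inj ENNReal.ofReal_ne_top).1 key

lemma lintegral_zygmundWeight_mul_le [IsFiniteMeasure μ] {f : X → ℝ} (hh : Integrable h μ)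
    (hh0 : 0 ≤ h) (hf : Integrable f μ) (hf0 : 0 ≤ f) :
    ∫⁻ y, ENNReal.ofReal (zygmundWeight μ h y * f y) ∂μ ≤ zygmundFunctional μ f := by
  set c := ⨍ z, h z ∂μ
  set a := ⨍ z, f z ∂μ
  have hc : 0 ≤ c := average_nonneg_of_nonneg hh0
  have ha : 0 ≤ a := average_nonneg_of_nonneg hf0
  have htangent : ∀ᵐ y ∂μ, zygmundSlope (h y / c) * f y
      ≤ f y * log (exp 1 + f y / a) + zygmundOffset (h y / c) * a := by
    rcases ha.eq_or_lt with ha_zero | ha_pos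
    · filter_upwards [ae_eq_zero_of_average_eq_zero hf hf0 ha_zero.symm] with y hy
      simpa [hy] using mul_nonneg (zygmundOffset_nonneg (div_nonneg (hh0 y) hc)) ha
    · exact ae_of_all _ fun y =>
        zygmundSlope_mul_le_of_pos (div_nonneg (hh0 y) hc) (hf0 y) ha_pos
  refine (ENNReal.add_le_add_iff_right ENNReal.ofReal_ne_top).1
    ((lintegral_zygmundWeight_mul_add_eq hh hh0 hf hf0).trans_le ?_)
  rw [zygmundFunctional_add_eq_lintegral hh hh0 hf hf0]
  exact lintegral_mono_ae (htangent.mono fun y hy => ENNReal.ofReal_le_ofReal hy)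

theorem zygmundFunctional_le_add [IsFiniteMeasure μ] {f g : X → ℝ} (hf : Integrable f μ)
    (hf0 : 0 ≤ f) (hg : Integrable g μ) (hg0 : 0 ≤ g) (hh : Integrable h μ) (hh0 : 0 ≤ h)
    (hle : ∀ y, h y ≤ f y + g y) :
    zygmundFunctional μ h ≤ zygmundFunctional μ f + zygmundFunctional μ g := by
  have hW := zygmundWeight_nonneg hh hh0
  calc zygmundFunctional μ h = ∫⁻ y, ENNReal.ofReal (zygmundWeight μ h y * h y) ∂μ :=
        (lintegral_zygmundWeight_mul_self hh hh0).symm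
    _ ≤ ∫⁻ y, ENNReal.ofReal (zygmundWeight μ h y * f y + zygmundWeight μ h y * g y) ∂μ :=
        lintegral_mono fun y => ENNReal.ofReal_le_ofReal <| by
          rw [← mul_add]; exact mul_le_mul_of_nonneg_left (hle y) (hW y)
    _ = ∫⁻ y, ENNReal.ofReal (zygmundWeight μ h y * f y) ∂μ
          + ∫⁻ y, ENNReal.ofReal (zygmundWeight μ h y * g y) ∂μ :=
        lintegral_ofReal_add ((aemeasurable_zygmundWeight hh.aemeasurable).mul hf.aemeasurable)
          (fun y => mul_nonneg (hW y) (hf0 y)) fun y => mul_nonneg (hW y) (hg0 y)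
    _ ≤ zygmundFunctional μ f + zygmundFunctional μ g :=
        add_le_add (lintegral_zygmundWeight_mul_le hh hh0 hf hf0)
          (lintegral_zygmundWeight_mul_le hh hh0 hg hg0)

end

lemma zygmundNorm_eq_zygmundFunctional {n : ℕ} (B : Set (EuclideanSpace ℝ (Fin n)))
    (F : EuclideanSpace ℝ (Fin n) → ℝ) :
    zygmundNorm B F = zygmundFunctional (volume.restrict B) fun y => |F y| := by
  refine lintegral_congr fun y => ?_
  rw [← enorm_eq_nnnorm, Real.enorm_eq_ofReal_abs, ← ENNReal.ofReal_mul (abs_nonneg _)]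

theorem zygmundNorm_triangle_general {n : ℕ} (x : EuclideanSpace ℝ (Fin n)) (r : ℝ)
    (F G : EuclideanSpace ℝ (Fin n) → ℝ)
    (hF : IntegrableOn F (Metric.ball x r) volume)
    (hG : IntegrableOn G (Metric.ball x r) volume) :
    zygmundNorm (Metric.ball x r) (F + G) ≤
      zygmundNorm (Metric.ball x r) F + zygmundNorm (Metric.ball x r) G := by
  have : IsFiniteMeasure (volume.restrict (ball x r)) :=
    isFiniteMeasure_restrict.2 measure_ball_lt_top.ne
  simp only [zygmundNorm_eq_zygmundFunctional]
  exact zygmundFunctional_le_add hF.abs (fun _ => abs_nonneg _) hG.abs (fun _ => abs_nonneg _)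
    (hF.add hG).abs (fun _ => abs_nonneg _) fun y => abs_add_le (F y) (G y)

/-- The Zygmund functional satisfies the triangle inequality on `L log L(B)`:
`‖F + G‖ ≤ ‖F‖ + ‖G‖`. -/
theorem zygmundNorm_triangle {n : ℕ} (x : EuclideanSpace ℝ (Fin n)) (r : ℝ) (hr : 0 < r)
    (F G : EuclideanSpace ℝ (Fin n) → ℝ)
    (hF : IntegrableOn F (Metric.ball x r) volume)
    (hG : IntegrableOn G (Metric.ball x r) volume) :
    zygmundNorm (Metric.ball x r) (F + G) ≤
      zygmundNorm (Metric.ball x r) F + zygmundNorm (Metric.ball x r) G :=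
  zygmundNorm_triangle_general x r F G hF hG
end
end

section
/- (Hölder bound leading to the very weak solution estimate) Let 1 < p < ∞ and 0 ≤ ε < p − 1. For vector fields ∇u, 𝔣, ∇φ, with ∇φ the gradient part of the Hodge decomposition |∇u|^{-ε}∇u = ∇φ + 𝔥 in L^{(p-ε)/(1-ε)}(ℝ^n, ℝ^n), the test identity ∫⟨|∇u|^{p-2}∇u, ∇φ⟩ = ∫⟨|𝔣|^{p-2}𝔣, ∇φ⟩ implies ∫_{ℝ^n} |∇u|^{p-ε} ≤ C(p,ε) ( ∫_{ℝ^n} |𝔣|^{p-ε} + ∫_{ℝ^n} |𝔥|^{(p-ε)/(1-ε)} ). -/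
/-! With `A = ∫ |∇u|^{p-ε}`, `F = ∫ |𝔣|^{p-ε}`, `H = ∫ |𝔥|^{(p-ε)/(1-ε)}` and the conjugate
exponents `a = (p-ε)/(p-1)`, `b = (p-ε)/(1-ε)`: since
`⟨|∇u|^{p-2}∇u, |∇u|^{-ε}∇u⟩ = |∇u|^{p-ε}`, the decomposition and the test identity give
`A = ∫⟨|𝔣|^{p-2}𝔣, ∇φ⟩ + ∫⟨|∇u|^{p-2}∇u, 𝔥⟩`. As `|∇φ| ≤ |∇u|^{1-ε} + |𝔥|`, Hölder's
inequality bounds the right side by `F^{1/a} A^{1/b} + F^{1/a} H^{1/b} + A^{1/a} H^{1/b}`, and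
Young's inequality with a small weight absorbs the two powers of `A` into the left side. -/

open MeasureTheory

namespace Real.HolderConjugate

variable {a b : ℝ}

theorem exists_rpow_mul_rpow_le (hab : a.HolderConjugate b) {t : ℝ} (ht : 0 < t) :
    ∃ C, 0 ≤ C ∧ ∀ X Y : ℝ, 0 ≤ X → 0 ≤ Y → X ^ (1 / a) * Y ^ (1 / b) ≤ t * X + C * Y := by
  have ha := hab.pos
  have hb := hab.symm.pos
  set c := (a * t) ^ (1 / a) with hc_def
  have hc : 0 < c := by positivity
  refine ⟨c⁻¹ ^ b / b, by positivity, fun X Y hX hY => ?_⟩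
  have key := young_inequality_of_nonneg (by positivity : 0 ≤ c * X ^ (1 / a))
    (by positivity : 0 ≤ c⁻¹ * Y ^ (1 / b)) hab
  have hca : c ^ a = a * t := by rw [hc_def, one_div, rpow_inv_rpow (by positivity) ha.ne']
  rw [mul_rpow hc.le (by positivity), mul_rpow (by positivity) (by positivity), one_div,
    one_div, rpow_inv_rpow hX ha.ne', rpow_inv_rpow hY hb.ne', hca] at key
  convert key using 1
  · field_simp
  · field_simp

theorem exists_le_mul_add_of_le_sum_rpow_mul_rpow (hab : a.HolderConjugate b) :
    ∃ C, 0 < C ∧ ∀ A F H : ℝ, 0 ≤ A → 0 ≤ F → 0 ≤ H →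
      A ≤ F ^ (1 / a) * A ^ (1 / b) + F ^ (1 / a) * H ^ (1 / b) + A ^ (1 / a) * H ^ (1 / b) →
      A ≤ C * (F + H) := by
  obtain ⟨C₁, hC₁, hY₁⟩ := hab.symm.exists_rpow_mul_rpow_le (t := 1 / 4) (by norm_num)
  obtain ⟨C₂, hC₂, hY₂⟩ := hab.exists_rpow_mul_rpow_le (t := 1 / 4) (by norm_num)
  obtain ⟨C₃, hC₃, hY₃⟩ := hab.exists_rpow_mul_rpow_le one_pos
  refine ⟨2 * (C₁ + C₂ + C₃ + 1), by positivity, fun A F H hA hF hH hle => ?_⟩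
  have h₁ := hY₁ A F hA hF
  have h₂ := hY₂ A H hA hH
  have h₃ := hY₃ F H hF hH
  rw [mul_comm] at h₁
  nlinarith [mul_nonneg hC₁ hH, mul_nonneg hC₂ hF, mul_nonneg hC₃ hF]

end Real.HolderConjugate

section Pointwise

variable {E : Type*} [NormedAddCommGroup E] [InnerProductSpace ℝ E]

theorem norm_rpow_neg_smul_self {ε : ℝ} (hε : ε ≠ 1) (v : E) :
    ‖‖v‖ ^ (-ε) • v‖ = ‖v‖ ^ (1 - ε) := by
  rcases eq_or_ne v 0 with rfl | hv
  · simp [Real.zero_rpow (sub_ne_zero.2 hε.symm)]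
  · rw [norm_smul, Real.norm_of_nonneg (by positivity), ← Real.rpow_add_one (by positivity),
      neg_add_eq_sub]

theorem rpow_sub_two_mul_inner_rpow_neg_smul_self {p ε : ℝ} (hpε : p ≠ ε) (v : E) :
    ‖v‖ ^ (p - 2) * inner ℝ v (‖v‖ ^ (-ε) • v) = ‖v‖ ^ (p - ε) := by
  rcases eq_or_ne v 0 with rfl | hv
  · simp [Real.zero_rpow (sub_ne_zero.2 hpε)]
  · have hv : 0 < ‖v‖ := norm_pos_iff.2 hv
    rw [real_inner_smul_right, real_inner_self_eq_norm_sq, ← Real.rpow_two, ← Real.rpow_add hv,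
      ← Real.rpow_add hv]
    ring_nf

theorem abs_rpow_sub_two_mul_inner_le (p : ℝ) (v w : E) :
    |‖v‖ ^ (p - 2) * inner ℝ v w| ≤ ‖v‖ ^ (p - 1) * ‖w‖ := by
  rcases eq_or_ne v 0 with rfl | hv
  · simp only [inner_zero_left, mul_zero, abs_zero]; positivity
  · have hv : 0 < ‖v‖ := norm_pos_iff.2 hv
    calc |‖v‖ ^ (p - 2) * inner ℝ v w| ≤ ‖v‖ ^ (p - 2) * (‖v‖ * ‖w‖) := by
          rw [abs_mul, abs_of_pos (by positivity)]
          gcongr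
          exact abs_real_inner_le_norm v w
      _ = ‖v‖ ^ (p - 1) * ‖w‖ := by
          rw [← mul_assoc, ← Real.rpow_add_one hv.ne']
          ring_nf

end Pointwise

section Holder

variable {α : Type*} [MeasurableSpace α] {μ : Measure α}
  {E F : Type*} [NormedAddCommGroup E] [NormedAddCommGroup F]
  {a b r s : ℝ} {u : α → E} {v : α → F}

theorem MeasureTheory.MemLp.norm_rpow_of_mul_eq (hu : MemLp u (.ofReal r) μ) (hs : 0 < s)
    (hsa : s * a = r) : MemLp (fun x => ‖u x‖ ^ s) (.ofReal a) μ := by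
  have := hu.norm_rpow_div (.ofReal s)
  rwa [ENNReal.toReal_ofReal hs.le, ← ENNReal.ofReal_div_of_pos hs, ← hsa,
    mul_div_cancel_left₀ _ hs.ne'] at this

theorem MeasureTheory.MemLp.integrable_norm_rpow_mul_norm (hab : a.HolderConjugate b)
    (hu : MemLp u (.ofReal r) μ) (hs : 0 < s) (hsa : s * a = r) (hv : MemLp v (.ofReal b) μ) :
    Integrable (fun x => ‖u x‖ ^ s * ‖v x‖) μ :=
  have := hab.ennrealOfReal
  (hu.norm_rpow_of_mul_eq hs hsa).integrable_mul hv.norm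

theorem MeasureTheory.MemLp.integral_norm_rpow_mul_norm_le (hab : a.HolderConjugate b)
    (hu : MemLp u (.ofReal r) μ) (hs : 0 < s) (hsa : s * a = r) (hv : MemLp v (.ofReal b) μ) :
    ∫ x, ‖u x‖ ^ s * ‖v x‖ ∂μ ≤
      (∫ x, ‖u x‖ ^ r ∂μ) ^ (1 / a) * (∫ x, ‖v x‖ ^ b ∂μ) ^ (1 / b) := by
  have := integral_mul_le_Lp_mul_Lq_of_nonneg hab (ae_of_all _ fun x => by positivity)
    (ae_of_all _ fun x => norm_nonneg _) (hu.norm_rpow_of_mul_eq hs hsa) hv.norm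
  simpa only [← Real.rpow_mul (norm_nonneg _), hsa] using this

end Holder

section Hodge

variable {α : Type*} [MeasurableSpace α] {μ : Measure α}
  {E : Type*} [NormedAddCommGroup E] [InnerProductSpace ℝ E]
  {a b r p : ℝ} {v w : α → E}

theorem MeasureTheory.MemLp.integrable_rpow_sub_two_mul_inner (hab : a.HolderConjugate b)
    (hv : MemLp v (.ofReal r) μ) (hp : 1 < p) (hpa : (p - 1) * a = r)
    (hw : MemLp w (.ofReal b) μ) :
    Integrable (fun x => ‖v x‖ ^ (p - 2) * inner ℝ (v x) (w x)) μ :=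
  (hv.integrable_norm_rpow_mul_norm hab (by linarith) hpa hw).mono'
    (((hv.1.norm.aemeasurable.pow_const _).aestronglyMeasurable).mul (hv.1.inner hw.1))
    (ae_of_all _ fun x => abs_rpow_sub_two_mul_inner_le p (v x) (w x))

theorem MeasureTheory.MemLp.integral_rpow_sub_two_mul_inner_le (hab : a.HolderConjugate b)
    (hv : MemLp v (.ofReal r) μ) (hp : 1 < p) (hpa : (p - 1) * a = r)
    (hw : MemLp w (.ofReal b) μ) :
    ∫ x, ‖v x‖ ^ (p - 2) * inner ℝ (v x) (w x) ∂μ ≤ ∫ x, ‖v x‖ ^ (p - 1) * ‖w x‖ ∂μ :=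
  integral_mono (hv.integrable_rpow_sub_two_mul_inner hab hp hpa hw)
    (hv.integrable_norm_rpow_mul_norm hab (by linarith) hpa hw)
    fun x => (le_abs_self _).trans (abs_rpow_sub_two_mul_inner_le p (v x) (w x))

theorem integral_norm_rpow_le_of_hodge {ε : ℝ} (hab : a.HolderConjugate b) (hp : 1 < p)
    (ha : (p - 1) * a = p - ε) (hb : (1 - ε) * b = p - ε) {Du f Dφ h : α → E}
    (hDu : MemLp Du (.ofReal (p - ε)) μ) (hf : MemLp f (.ofReal (p - ε)) μ)
    (hh : MemLp h (.ofReal b) μ) (hDφ : MemLp Dφ (.ofReal b) μ)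
    (hHodge : ∀ x, ‖Du x‖ ^ (-ε) • Du x = Dφ x + h x)
    (hTest : ∫ x, ‖Du x‖ ^ (p - 2) * inner ℝ (Du x) (Dφ x) ∂μ =
      ∫ x, ‖f x‖ ^ (p - 2) * inner ℝ (f x) (Dφ x) ∂μ) :
    ∫ x, ‖Du x‖ ^ (p - ε) ∂μ ≤
      (∫ x, ‖f x‖ ^ (p - ε) ∂μ) ^ (1 / a) * (∫ x, ‖Du x‖ ^ (p - ε) ∂μ) ^ (1 / b) +
      (∫ x, ‖f x‖ ^ (p - ε) ∂μ) ^ (1 / a) * (∫ x, ‖h x‖ ^ b ∂μ) ^ (1 / b) +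
      (∫ x, ‖Du x‖ ^ (p - ε) ∂μ) ^ (1 / a) * (∫ x, ‖h x‖ ^ b ∂μ) ^ (1 / b) := by
  have hpε : 0 < p - ε := ha ▸ mul_pos (by linarith) hab.pos
  have hε : 0 < 1 - ε := pos_of_mul_pos_left (hb ▸ hpε) hab.symm.nonneg
  have hp₁ : 0 < p - 1 := by linarith
  have hV : MemLp (fun x => Dφ x + h x) (.ofReal b) μ := hDφ.add hh
  have hV_norm (x : α) : ‖Dφ x + h x‖ = ‖Du x‖ ^ (1 - ε) := by
    rw [← hHodge, norm_rpow_neg_smul_self (by linarith)]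
  have hV_integral : ∫ x, ‖Dφ x + h x‖ ^ b ∂μ = ∫ x, ‖Du x‖ ^ (p - ε) ∂μ := by
    simp only [hV_norm, ← Real.rpow_mul (norm_nonneg _), hb]
  have hsplit : ∫ x, ‖Du x‖ ^ (p - ε) ∂μ =
      (∫ x, ‖Du x‖ ^ (p - 2) * inner ℝ (Du x) (Dφ x) ∂μ) +
        ∫ x, ‖Du x‖ ^ (p - 2) * inner ℝ (Du x) (h x) ∂μ := by
    rw [← integral_add (hDu.integrable_rpow_sub_two_mul_inner hab hp ha hDφ)
      (hDu.integrable_rpow_sub_two_mul_inner hab hp ha hh)]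
    congr 1 with x
    rw [← mul_add, ← inner_add_right, ← hHodge,
      rpow_sub_two_mul_inner_rpow_neg_smul_self (by linarith)]
  have htriangle : ∫ x, ‖f x‖ ^ (p - 1) * ‖Dφ x‖ ∂μ ≤
      (∫ x, ‖f x‖ ^ (p - 1) * ‖Dφ x + h x‖ ∂μ) + ∫ x, ‖f x‖ ^ (p - 1) * ‖h x‖ ∂μ := by
    rw [← integral_add (hf.integrable_norm_rpow_mul_norm hab hp₁ ha hV)
      (hf.integrable_norm_rpow_mul_norm hab hp₁ ha hh)]
    refine integral_mono (hf.integrable_norm_rpow_mul_norm hab hp₁ ha hDφ)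
      ((hf.integrable_norm_rpow_mul_norm hab hp₁ ha hV).add
        (hf.integrable_norm_rpow_mul_norm hab hp₁ ha hh)) fun x => ?_
    rw [← mul_add]
    gcongr
    exact norm_le_add_norm_add _ _
  calc ∫ x, ‖Du x‖ ^ (p - ε) ∂μ
      = (∫ x, ‖f x‖ ^ (p - 2) * inner ℝ (f x) (Dφ x) ∂μ) +
          ∫ x, ‖Du x‖ ^ (p - 2) * inner ℝ (Du x) (h x) ∂μ := by rw [hsplit, hTest]
    _ ≤ (∫ x, ‖f x‖ ^ (p - 1) * ‖Dφ x‖ ∂μ) + ∫ x, ‖Du x‖ ^ (p - 1) * ‖h x‖ ∂μ :=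
        add_le_add (hf.integral_rpow_sub_two_mul_inner_le hab hp ha hDφ)
          (hDu.integral_rpow_sub_two_mul_inner_le hab hp ha hh)
    _ ≤ (∫ x, ‖f x‖ ^ (p - 1) * ‖Dφ x + h x‖ ∂μ) + (∫ x, ‖f x‖ ^ (p - 1) * ‖h x‖ ∂μ) +
          ∫ x, ‖Du x‖ ^ (p - 1) * ‖h x‖ ∂μ := by gcongr
    _ ≤ _ := by
        gcongr
        · simpa only [hV_integral] using hf.integral_norm_rpow_mul_norm_le hab hp₁ ha hV
        · exact hf.integral_norm_rpow_mul_norm_le hab hp₁ ha hh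
        · exact hDu.integral_norm_rpow_mul_norm_le hab hp₁ ha hh

end Hodge

theorem very_weak_solution_holder_bound_general (n : ℕ) (p ε : ℝ)
    (hp : 1 < p) (hε₂ : ε < 1) :
    ∃ C : ℝ, 0 < C ∧
      ∀ (Du f Dφ h : EuclideanSpace ℝ (Fin n) → EuclideanSpace ℝ (Fin n)),
        MemLp Du (ENNReal.ofReal (p - ε)) volume →
        MemLp f (ENNReal.ofReal (p - ε)) volume →
        MemLp h (ENNReal.ofReal ((p - ε) / (1 - ε))) volume →
        MemLp Dφ (ENNReal.ofReal ((p - ε) / (1 - ε))) volume →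
        -- the Hodge decomposition `|∇u|^{-ε}∇u = ∇φ + 𝔥`
        (∀ x, ‖Du x‖ ^ (-ε) • Du x = Dφ x + h x) →
        -- the test identity `∫⟨|∇u|^{p-2}∇u, ∇φ⟩ = ∫⟨|𝔣|^{p-2}𝔣, ∇φ⟩`
        (∫ x, ‖Du x‖ ^ (p - 2) * (inner ℝ (Du x) (Dφ x) : ℝ) =
          ∫ x, ‖f x‖ ^ (p - 2) * (inner ℝ (f x) (Dφ x) : ℝ)) →
          ∫ x, ‖Du x‖ ^ (p - ε) ≤
            C * ((∫ x, ‖f x‖ ^ (p - ε)) +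
              ∫ x, ‖h x‖ ^ ((p - ε) / (1 - ε))) := by
  have hp₁ : 0 < p - 1 := by linarith
  have hε : 0 < 1 - ε := by linarith
  have hpε : 0 < p - ε := by linarith
  have hab : ((p - ε) / (p - 1)).HolderConjugate ((p - ε) / (1 - ε)) := by
    simpa only [inv_div] using Real.HolderConjugate.inv_inv (a := (p - 1) / (p - ε))
      (b := (1 - ε) / (p - ε)) (div_pos hp₁ hpε) (div_pos hε hpε) (by field_simp; ring)
  obtain ⟨C, hC, habsorb⟩ := hab.exists_le_mul_add_of_le_sum_rpow_mul_rpow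
  refine ⟨C, hC, fun Du f Dφ h hDu hf hh hDφ hHodge hTest => habsorb _ _ _
    (by positivity) (by positivity) (by positivity) ?_⟩
  exact integral_norm_rpow_le_of_hodge hab hp (by field_simp) (by field_simp) hDu hf hh hDφ
    hHodge hTest

/-- Hölder bound leading to the very weak solution estimate: if
`|∇u|^{-ε}∇u = ∇φ + 𝔥` is the Hodge decomposition in `L^{(p-ε)/(1-ε)}(ℝ^n,ℝ^n)` and
`∫⟨|∇u|^{p-2}∇u, ∇φ⟩ = ∫⟨|𝔣|^{p-2}𝔣, ∇φ⟩`, then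
`∫ |∇u|^{p-ε} ≤ C(p,ε) (∫ |𝔣|^{p-ε} + ∫ |𝔥|^{(p-ε)/(1-ε)})`. -/
theorem very_weak_solution_holder_bound (n : ℕ) (p ε : ℝ)
    (hp : 1 < p) (hε₀ : 0 ≤ ε) (hε₁ : ε < p - 1) (hε₂ : ε < 1) :
    ∃ C : ℝ, 0 < C ∧
      ∀ (Du f Dφ h : EuclideanSpace ℝ (Fin n) → EuclideanSpace ℝ (Fin n)),
        MemLp Du (ENNReal.ofReal (p - ε)) volume →
        MemLp f (ENNReal.ofReal (p - ε)) volume →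
        MemLp h (ENNReal.ofReal ((p - ε) / (1 - ε))) volume →
        MemLp Dφ (ENNReal.ofReal ((p - ε) / (1 - ε))) volume →
        -- the Hodge decomposition `|∇u|^{-ε}∇u = ∇φ + 𝔥`
        (∀ x, ‖Du x‖ ^ (-ε) • Du x = Dφ x + h x) →
        -- the test identity `∫⟨|∇u|^{p-2}∇u, ∇φ⟩ = ∫⟨|𝔣|^{p-2}𝔣, ∇φ⟩`
        (∫ x, ‖Du x‖ ^ (p - 2) * (inner ℝ (Du x) (Dφ x) : ℝ) =
          ∫ x, ‖f x‖ ^ (p - 2) * (inner ℝ (f x) (Dφ x) : ℝ)) →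
          ∫ x, ‖Du x‖ ^ (p - ε) ≤
            C * ((∫ x, ‖f x‖ ^ (p - ε)) +
              ∫ x, ‖h x‖ ^ ((p - ε) / (1 - ε))) :=
  very_weak_solution_holder_bound_general n p ε hp hε₂
end
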